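/- Let H be self-adjoint on ℋ, 𝒟 = {ℋ_ν} an orthogonal decomposition, ψ₀ a unit vector, and ε, δ' > 0. If for every ν, limsup_{T→∞} (1/T)·∫₀^T (‖P_ν ψ_t‖² − d_ν/D)² dt < ε²·(d_ν/D)²·(δ'/N), then the system (H, 𝒟, ψ₀) is ε-δ'-normal in the strong sense. -/

import Mathlib

open MeasureTheory Filter

noncomputable section

/-- Time evolution `ψ_t = exp(−iHt)ψ₀`. -/
def timeEvolved (D : ℕ) (H : EuclideanSpace ℂ (Fin D) →L[ℂ] EuclideanSpace ℂ (Fin D))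
    (ψ₀ : EuclideanSpace ℂ (Fin D)) (t : ℝ) : EuclideanSpace ℂ (Fin D) :=
  NormedSpace.exp ((-(t : ℂ) * Complex.I) • H) ψ₀

/-- `p t` holds for `(1−δ')`-most times `t` in the long run. -/
def mostTimes (δ' : ℝ) (p : ℝ → Prop) : Prop :=
  1 - δ' ≤ liminf (fun T : ℝ =>
    (volume {t : ℝ | t ∈ Set.Ioo 0 T ∧ p t}).toReal / T) atTop

/-- The system `(H, 𝒟, ψ₀)` is `ε`-`δ'`-normal in von Neumann's sense. -/
def normalVN (D N : ℕ) (H : EuclideanSpace ℂ (Fin D) →L[ℂ] EuclideanSpace ℂ (Fin D))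
    (V : Fin N → Submodule ℂ (EuclideanSpace ℂ (Fin D))) (dv : Fin N → ℕ)
    (ψ₀ : EuclideanSpace ℂ (Fin D)) (ε δ' : ℝ) : Prop :=
  mostTimes δ' (fun t => ∀ ν : Fin N,
    |‖(Submodule.orthogonalProjectionOnto (V ν) (timeEvolved D H ψ₀ t) : EuclideanSpace ℂ (Fin D))‖ ^ 2
        - (dv ν : ℝ) / D|
      < ε * Real.sqrt ((dv ν : ℝ) / (N * D)))

/-- The system `(H, 𝒟, ψ₀)` is `ε`-`δ'`-normal in the strong sense. -/
def normalStrong (D N : ℕ) (H : EuclideanSpace ℂ (Fin D) →L[ℂ] EuclideanSpace ℂ (Fin D))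
    (V : Fin N → Submodule ℂ (EuclideanSpace ℂ (Fin D))) (dv : Fin N → ℕ)
    (ψ₀ : EuclideanSpace ℂ (Fin D)) (ε δ' : ℝ) : Prop :=
  mostTimes δ' (fun t => ∀ ν : Fin N,
    |‖(Submodule.orthogonalProjectionOnto (V ν) (timeEvolved D H ψ₀ t) : EuclideanSpace ℂ (Fin D))‖ ^ 2
        - (dv ν : ℝ) / D|
      < ε * ((dv ν : ℝ) / D))

/-!
Chebyshev's inequality in time: with `f_ν t = ‖P_ν ψ_t‖² − d_ν/D` and `c_ν = ε d_ν/D`, the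
part of `(0, T)` where `|f_ν| ≥ c_ν` has measure at most `c_ν⁻² ∫₀ᵀ f_ν²`, which the hypothesis
eventually bounds by `T δ'/N`. A union bound over the `N` blocks leaves measure at least
`(1 − δ') T` on which every `|f_ν| < c_ν`. Unitarity of `exp(−iHt)` keeps `f_ν` bounded, so the
time averages are bounded and their `limsup` is not a junk value.
-/

open Set

def timeAverage (g : ℝ → ℝ) (T : ℝ) : ℝ := (1 / T) * ∫ t in (0:ℝ)..T, g t

theorem mostTimes_of_eventually_le {δ : ℝ} {p : ℝ → Prop}
    (h : ∀ᶠ T in atTop, (1 - δ) * T ≤ volume.real {t | t ∈ Ioo 0 T ∧ p t}) :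
    mostTimes δ p := by
  have hcobdd : IsCoboundedUnder (· ≥ ·) atTop
      fun T : ℝ => (volume {t | t ∈ Ioo 0 T ∧ p t}).toReal / T := by
    refine isCoboundedUnder_ge_of_eventually_le atTop (x := 1) ?_
    filter_upwards [eventually_gt_atTop 0] with T hT
    rw [div_le_one hT]
    calc volume.real {t | t ∈ Ioo 0 T ∧ p t} ≤ volume.real (Ioo 0 T) :=
          measureReal_mono (fun t ht => ht.1) measure_Ioo_lt_top.ne
      _ = T := by simp [hT.le]
  refine le_liminf_of_le hcobdd ?_
  filter_upwards [h, eventually_gt_atTop 0] with T hgood hT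
  rwa [le_div_iff₀ hT]

theorem eventually_le_measureReal_forall {ι : Type*} [Fintype ι] {p : ι → ℝ → Prop}
    {δ : ι → ℝ} (h : ∀ i, ∀ᶠ T in atTop, volume.real {t | t ∈ Ioo 0 T ∧ ¬p i t} ≤ δ i * T) :
    ∀ᶠ T in atTop, (1 - ∑ i, δ i) * T ≤ volume.real {t | t ∈ Ioo 0 T ∧ ∀ i, p i t} := by
  filter_upwards [eventually_all.2 h, eventually_ge_atTop 0] with T hbad hT
  set good := {t | t ∈ Ioo 0 T ∧ ∀ i, p i t}
  have hcover : Ioo 0 T ⊆ good ∪ ⋃ i, {t | t ∈ Ioo 0 T ∧ ¬p i t} := by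
    intro t ht
    by_cases hp : ∀ i, p i t
    · exact Or.inl ⟨ht, hp⟩
    · obtain ⟨i, hi⟩ := not_forall.1 hp
      exact Or.inr (mem_iUnion.2 ⟨i, ht, hi⟩)
  have hT_le : T ≤ volume.real good + (∑ i, δ i) * T :=
    calc T = volume.real (Ioo 0 T) := by simp [hT]
      _ ≤ volume.real (good ∪ ⋃ i, {t | t ∈ Ioo 0 T ∧ ¬p i t}) :=
          measureReal_mono hcover <| measure_ne_top_of_subset
            (union_subset (fun t ht => ht.1) (iUnion_subset fun i t ht => ht.1))
            measure_Ioo_lt_top.ne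
      _ ≤ volume.real good + ∑ i, volume.real {t | t ∈ Ioo 0 T ∧ ¬p i t} :=
          (measureReal_union_le _ _).trans (by gcongr; exact measureReal_iUnion_fintype_le _)
      _ ≤ volume.real good + (∑ i, δ i) * T := by
          rw [Finset.sum_mul]; gcongr with i; exact hbad i
  linarith

theorem sq_mul_measureReal_le_integral_sq {f : ℝ → ℝ} {c T : ℝ} (hc : 0 ≤ c) (hT : 0 ≤ T)
    (hf : IntervalIntegrable (fun t => f t ^ 2) volume 0 T) :
    c ^ 2 * volume.real {t | t ∈ Ioo 0 T ∧ c ≤ |f t|} ≤ ∫ t in (0:ℝ)..T, f t ^ 2 := by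
  have hmarkov := mul_meas_ge_le_integral_of_nonneg (μ := volume.restrict (Ioc 0 T))
    (Eventually.of_forall fun t => sq_nonneg (f t))
    ((intervalIntegrable_iff_integrableOn_Ioc_of_le hT).1 hf) (c ^ 2)
  rw [measureReal_restrict_apply' measurableSet_Ioc, ← intervalIntegral.integral_of_le hT]
    at hmarkov
  refine le_trans ?_ hmarkov
  gcongr
  · exact (measure_mono inter_subset_right).trans_lt measure_Ioc_lt_top |>.ne
  · rintro t ⟨ht, hct⟩
    exact ⟨(pow_le_pow_left₀ hc hct 2).trans_eq (sq_abs _), Ioo_subset_Ioc_self ht⟩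

theorem timeAverage_le {g : ℝ → ℝ} {M T : ℝ} (hg : ∀ t, g t ≤ M) (hT : 0 < T)
    (hint : IntervalIntegrable g volume 0 T) : timeAverage g T ≤ M := by
  unfold timeAverage
  calc (1 / T) * ∫ t in (0:ℝ)..T, g t ≤ (1 / T) * ∫ _ in (0:ℝ)..T, M := by
        gcongr
        exact intervalIntegral.integral_mono_on hT.le hint intervalIntegrable_const fun t _ => hg t
    _ = M := by field_simp; simp

theorem eventually_measureReal_le_of_limsup_timeAverage_sq_lt {f : ℝ → ℝ} {c δ M : ℝ}
    (hf : Continuous f) (hM : ∀ t, |f t| ≤ M) (hc : 0 ≤ c)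
    (h : limsup (timeAverage fun t => f t ^ 2) atTop < c ^ 2 * δ) :
    ∀ᶠ T in atTop, volume.real {t | t ∈ Ioo 0 T ∧ ¬|f t| < c} ≤ δ * T := by
  have hint : ∀ T, IntervalIntegrable (fun t => f t ^ 2) volume 0 T :=
    fun T => (hf.pow 2).intervalIntegrable 0 T
  have hbdd : IsBoundedUnder (· ≤ ·) atTop (timeAverage fun t => f t ^ 2) := by
    refine isBoundedUnder_of_eventually_le (a := M ^ 2) ?_
    filter_upwards [eventually_gt_atTop 0] with T hT
    exact timeAverage_le (fun t => sq_le_sq' (abs_le.1 (hM t)).1 (abs_le.1 (hM t)).2) hT (hint T)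
  filter_upwards [eventually_lt_of_limsup_lt h hbdd, eventually_gt_atTop 0] with T havg hT0
  simp_rw [not_lt]
  have hchebyshev := sq_mul_measureReal_le_integral_sq hc hT0.le (hint T)
  refine (lt_of_mul_lt_mul_left ?_ (sq_nonneg c)).le
  calc c ^ 2 * volume.real {t | t ∈ Ioo 0 T ∧ c ≤ |f t|}
      ≤ T * timeAverage (fun t => f t ^ 2) T := by
        rwa [timeAverage, ← mul_assoc, mul_one_div_cancel hT0.ne', one_mul]
    _ < T * (c ^ 2 * δ) := by gcongr
    _ = c ^ 2 * (δ * T) := by ring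

theorem mostTimes_forall_abs_lt_of_limsup_timeAverage_sq_lt {ι : Type*} [Fintype ι]
    {f : ι → ℝ → ℝ} {c : ι → ℝ} {δ : ℝ} (hδ : 0 ≤ δ) (hf : ∀ i, Continuous (f i))
    (hbdd : ∀ i, ∃ M, ∀ t, |f i t| ≤ M) (hc : ∀ i, 0 ≤ c i)
    (h : ∀ i, limsup (timeAverage fun t => f i t ^ 2) atTop
      < c i ^ 2 * (δ / Fintype.card ι)) :
    mostTimes δ fun t => ∀ i, |f i t| < c i := by
  have hbad i := (hbdd i).elim fun M hM =>
    eventually_measureReal_le_of_limsup_timeAverage_sq_lt (hf i) hM (hc i) (h i)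
  have hsum : ∑ _i : ι, δ / Fintype.card ι ≤ δ := by
    rw [Finset.sum_const, Finset.card_univ, nsmul_eq_mul]
    rcases (Fintype.card ι).eq_zero_or_pos with hι | hι
    · simpa [hι] using hδ
    · rw [mul_div_cancel₀ _ (by positivity)]
  apply mostTimes_of_eventually_le
  filter_upwards [eventually_le_measureReal_forall hbad, eventually_ge_atTop 0] with T hgood hT
  exact le_trans (by gcongr) hgood

theorem norm_timeEvolved (D : ℕ) {H : EuclideanSpace ℂ (Fin D) →L[ℂ] EuclideanSpace ℂ (Fin D)}
    (hH : IsSelfAdjoint H) (ψ₀ : EuclideanSpace ℂ (Fin D)) (t : ℝ) :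
    ‖timeEvolved D H ψ₀ t‖ = ‖ψ₀‖ := by
  have hskew : (-(t : ℂ) * Complex.I) ∈ skewAdjoint ℂ := by
    rw [skewAdjoint.mem_iff]; simp
  let +nondep : NormedAlgebra ℚ (EuclideanSpace ℂ (Fin D) →L[ℂ] EuclideanSpace ℂ (Fin D)) :=
    .restrictScalars ℚ ℂ _
  have hu : NormedSpace.exp ((-(t : ℂ) * Complex.I) • H) ∈ unitary _ :=
    NormedSpace.exp_mem_unitary_of_mem_skewAdjoint (IsSelfAdjoint.smul_mem_skewAdjoint hskew hH)
  exact ContinuousLinearMap.norm_map_of_mem_unitary hu ψ₀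

theorem continuous_timeEvolved (D : ℕ)
    (H : EuclideanSpace ℂ (Fin D) →L[ℂ] EuclideanSpace ℂ (Fin D))
    (ψ₀ : EuclideanSpace ℂ (Fin D)) : Continuous (timeEvolved D H ψ₀) := by
  let +nondep : NormedAlgebra ℚ (EuclideanSpace ℂ (Fin D) →L[ℂ] EuclideanSpace ℂ (Fin D)) :=
    .restrictScalars ℚ ℂ _
  exact (NormedSpace.exp_continuous.comp (by fun_prop)).clm_apply continuous_const

theorem normality_criterion_strong_general (D N : ℕ)
    (H : EuclideanSpace ℂ (Fin D) →L[ℂ] EuclideanSpace ℂ (Fin D)) (hH : IsSelfAdjoint H)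
    (V : Fin N → Submodule ℂ (EuclideanSpace ℂ (Fin D)))
    (dv : Fin N → ℕ)
    (ψ₀ : EuclideanSpace ℂ (Fin D))
    (ε δ' : ℝ) (hε : 0 < ε) (hδ' : 0 < δ')
    (hG : ∀ ν : Fin N,
      limsup (fun T : ℝ => (1 / T) *
          ∫ t in (0:ℝ)..T,
            (‖(Submodule.orthogonalProjectionOnto (V ν) (timeEvolved D H ψ₀ t) :
                EuclideanSpace ℂ (Fin D))‖ ^ 2 - (dv ν : ℝ) / D) ^ 2) atTop
        < ε ^ 2 * ((dv ν : ℝ) / D) ^ 2 * (δ' / N)) :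
    normalStrong D N H V dv ψ₀ ε δ' := by
  have hproj_le ν t : ‖(V ν).orthogonalProjectionOnto (timeEvolved D H ψ₀ t)‖ ≤ ‖ψ₀‖ :=
    ((V ν).norm_orthogonalProjectionOnto_apply_le _).trans_eq (norm_timeEvolved D hH ψ₀ t)
  refine mostTimes_forall_abs_lt_of_limsup_timeAverage_sq_lt hδ'.le (fun ν => ?_)
    (fun ν => ⟨‖ψ₀‖ ^ 2 + dv ν / D, fun t => ?_⟩) (fun ν => by positivity)
    (fun ν => by rw [Fintype.card_fin, mul_pow]; exact hG ν)
  · exact (continuous_subtype_val.comp ((V ν).orthogonalProjectionOnto.continuous.comp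
      (continuous_timeEvolved D H ψ₀))).norm.pow 2 |>.sub continuous_const
  · refine (abs_sub _ _).trans ?_
    rw [abs_of_nonneg (by positivity), abs_of_nonneg (by positivity)]
    gcongr
    exact hproj_le ν t

/-- if for every `ν` the time average of `(‖P_ν ψ_t‖² − d_ν/D)²` is (in the
`limsup` sense) below `ε²·(d_ν/D)²·(δ'/N)`, then the system is `ε`-`δ'`-normal in
the strong sense. -/
theorem normality_criterion_strong (D N : ℕ) (hD : 1 ≤ D)
    (H : EuclideanSpace ℂ (Fin D) →L[ℂ] EuclideanSpace ℂ (Fin D)) (hH : IsSelfAdjoint H)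
    (V : Fin N → Submodule ℂ (EuclideanSpace ℂ (Fin D)))
    (horth : ∀ ν ν', ν ≠ ν' → Submodule.IsOrtho (V ν) (V ν'))
    (hspan : (⨆ ν, V ν) = ⊤)
    (dv : Fin N → ℕ) (hdim : ∀ ν, Module.finrank ℂ (V ν) = dv ν)
    (hsum : ∑ ν, dv ν = D)
    (ψ₀ : EuclideanSpace ℂ (Fin D)) (hψ₀ : ‖ψ₀‖ = 1)
    (ε δ' : ℝ) (hε : 0 < ε) (hδ' : 0 < δ')
    (hG : ∀ ν : Fin N,
      limsup (fun T : ℝ => (1 / T) *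
          ∫ t in (0:ℝ)..T,
            (‖(Submodule.orthogonalProjectionOnto (V ν) (timeEvolved D H ψ₀ t) :
                EuclideanSpace ℂ (Fin D))‖ ^ 2 - (dv ν : ℝ) / D) ^ 2) atTop
        < ε ^ 2 * ((dv ν : ℝ) / D) ^ 2 * (δ' / N)) :
    normalStrong D N H V dv ψ₀ ε δ' :=
  normality_criterion_strong_general D N H hH V dv ψ₀ ε δ' hε hδ' hG
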